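/- arXiv:2007.09403 — 2 statements merged into one kernel-verified Lean document; each statement's English description precedes it below -/
import Mathlib

section
/- Let s be a natural number and let (A, +, ∘) be a left brace such that A^s = 0, where A^1 = A and A^{i+1} is the additive subgroup generated by all elements a*b with a ∈ A and b ∈ A^i. Then for all a, b, c ∈ A, the element a*(b*c) − (a*b)*c − b*(a*c) + (b*a)*c lies in the additive subgroup of (A,+) generated by all iterated *-products (with any distribution of brackets) whose factors are taken from {a, b} followed by a single final factor c, in which at least three factors from {a, b} occur and in which both a and b occur at least once. -/
/-- A left brace: an abelian group `(A, +)` together with a group operation `∘`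
satisfying `a ∘ (b + c) + a = a ∘ b + a ∘ c`. -/
structure LeftBrace (A : Type*) [AddCommGroup A] where
  circ : A → A → A
  one : A
  inv : A → A
  circ_assoc : ∀ a b c : A, circ (circ a b) c = circ a (circ b c)
  one_circ : ∀ a : A, circ one a = a
  circ_one : ∀ a : A, circ a one = a
  inv_circ : ∀ a : A, circ (inv a) a = one
  left_dist : ∀ a b c : A, circ a (b + c) + a = circ a b + circ a c

/-- `a * b = a ∘ b - a - b`. -/
def LeftBrace.star {A : Type*} [AddCommGroup A] (B : LeftBrace A) (a b : A) : A :=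
  B.circ a b - a - b

/-- The left radical chain: `leftChain B i` is `A^i` for `i ≥ 1` (with the
convention `leftChain B 0 = ⊤`); `A^1 = A` and `A^{i+1}` is the additive
subgroup generated by all `a * b` with `a ∈ A`, `b ∈ A^i`. -/
def LeftBrace.leftChain {A : Type*} [AddCommGroup A] (B : LeftBrace A) : ℕ → AddSubgroup A
  | 0 => ⊤
  | 1 => ⊤
  | (n+2) => AddSubgroup.closure {x : A | ∃ a : A, ∃ b ∈ LeftBrace.leftChain B (n+1), x = B.star a b}

/-- `BraceWord B a b c w na nb t` says that `w` is an iterated `*`-product whose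
leaves are copies of `a` (appearing `na` times) and of `b` (appearing `nb` times),
and, if `t = true`, additionally a single copy of `c` as the rightmost (final) leaf. -/
inductive BraceWord {A : Type*} [AddCommGroup A] (B : LeftBrace A) (a b c : A) :
    A → ℕ → ℕ → Bool → Prop
  | base_a : BraceWord B a b c a 1 0 false
  | base_b : BraceWord B a b c b 0 1 false
  | base_c : BraceWord B a b c c 0 0 true
  | node {u v : A} {na₁ nb₁ na₂ nb₂ : ℕ} {t : Bool} :
      BraceWord B a b c u na₁ nb₁ false → BraceWord B a b c v na₂ nb₂ t →
      BraceWord B a b c (B.star u v) (na₁ + na₂) (nb₁ + nb₂) t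

/-!
Since `(x ∘ y) * c = x * (y * c) + x * c + y * c` and `x ∘ y = x + y + x * y`, the element is
`Δ(a + b, a * b) - Δ(a + b, b * a)`, where `Δ(x, y) = (x + y) * c - x * c - y * c`. Grade words by
the number of letters from `{a, b}` and the number of each of `a`, `b`. Writing
`x + y = x ∘ λ_x⁻¹ y`, where `λ_x⁻¹ y - y = -x * λ_x⁻¹ y`, shows that `Δ(x, y)` has degree at least
`deg x + deg y` once left multiplication by any element of the span of `{a, b}`-words of degree
`(m, k)` raises degrees by `(m, k)`. That property holds for single words, is stable under `∘` and
`∘`-inverses, and passes to the whole span by the same decomposition of `x + y`: the correction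
`λ_x⁻¹ y - y` lies one step further down the chain `A^d`, and `A^s = 0` ends the induction.
-/

namespace LeftBrace

variable {A : Type*} [AddCommGroup A] (B : LeftBrace A)

lemma circ_eq_add_add_star (x y : A) : B.circ x y = x + y + B.star x y := by
  unfold star; abel

lemma circ_add (x y z : A) : B.circ x (y + z) = B.circ x y + B.circ x z - x :=
  eq_sub_of_add_eq (B.left_dist x y z)

lemma circ_zero (x : A) : B.circ x 0 = x := by
  have h := B.left_dist x 0 0
  rw [add_zero] at h
  exact (add_left_cancel h).symm

lemma one_eq_zero : B.one = 0 :=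
  (B.circ_zero B.one).symm.trans (B.one_circ 0)

lemma zero_circ (x : A) : B.circ 0 x = x := by
  simpa [B.one_eq_zero] using B.one_circ x

lemma star_add (x y z : A) : B.star x (y + z) = B.star x y + B.star x z := by
  unfold star; rw [B.circ_add]; abel

@[simp] lemma zero_star (x : A) : B.star 0 x = 0 := by
  simp [star, B.zero_circ]

lemma circ_star (x y z : A) :
    B.star (B.circ x y) z = B.star x (B.star y z) + B.star x z + B.star y z := by
  simp only [star, B.circ_assoc]
  rw [B.circ_eq_add_add_star y z, B.circ_add, B.circ_add]
  simp only [star]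
  abel_nf

lemma circ_left_cancel (x : A) {y z : A} (h : B.circ x y = B.circ x z) : y = z := by
  simpa [← B.circ_assoc, B.inv_circ, B.one_circ] using congrArg (B.circ (B.inv x)) h

lemma circ_inv (x : A) : B.circ x (B.inv x) = 0 := by
  apply B.circ_left_cancel (B.inv x)
  rw [← B.circ_assoc, B.inv_circ, B.one_circ, B.circ_zero]

lemma neg_eq_inv_add_star (x : A) : -x = B.inv x + B.star x (B.inv x) :=
  neg_eq_of_add_eq_zero_right (by rw [← add_assoc, ← B.circ_eq_add_add_star, B.circ_inv])

def starEnd (x : A) : AddMonoid.End A := AddMonoidHom.mk' (B.star x) (B.star_add x)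

lemma star_mem_leftChain_succ {d : ℕ} {y : A} (hy : y ∈ B.leftChain d) (x : A) :
    B.star x y ∈ B.leftChain (d + 1) := by
  cases d with
  | zero => exact AddSubgroup.mem_top _
  | succ n => exact AddSubgroup.subset_closure ⟨x, y, hy, rfl⟩

lemma leftChain_succ_le (d : ℕ) : B.leftChain (d + 1) ≤ B.leftChain d := by
  induction d with
  | zero => exact le_top
  | succ n ih =>
    cases n with
    | zero => exact le_top
    | succ k =>
      refine AddSubgroup.closure_le _ |>.2 ?_
      rintro _ ⟨x, y, hy, rfl⟩
      exact AddSubgroup.subset_closure ⟨x, y, ih hy, rfl⟩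

lemma leftChain_antitone : Antitone B.leftChain :=
  antitone_nat_of_succ_le B.leftChain_succ_le

lemma starEnd_pow_apply_mem (x y : A) (n : ℕ) : (B.starEnd x ^ n) y ∈ B.leftChain n := by
  induction n with
  | zero => exact AddSubgroup.mem_top _
  | succ n ih =>
    rw [AddMonoid.End.coe_pow, Function.iterate_succ_apply', ← AddMonoid.End.coe_pow]
    exact B.star_mem_leftChain_succ ih x

/-- `λ_x⁻¹` for `λ_x y = x ∘ y - x = y + x * y`, as the Neumann series truncated at `s`; it is
exact once `A^s = 0`. -/
def lamInv (s : ℕ) (x : A) : AddMonoid.End A := ∑ k ∈ Finset.range s, (-B.starEnd x) ^ k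

variable {s : ℕ}

lemma starEnd_pow_eq_zero (hs : B.leftChain s = ⊥) (x : A) : B.starEnd x ^ s = 0 := by
  ext y
  simpa [hs] using B.starEnd_pow_apply_mem x y s

lemma lamInv_mem {H : AddSubgroup A} {x : A} (hx : ∀ z ∈ H, B.star x z ∈ H) {y : A}
    (hy : y ∈ H) : B.lamInv s x y ∈ H := by
  have hmaps : Set.MapsTo (-B.starEnd x) H H := fun z hz => H.neg_mem (hx z hz)
  have hsum : B.lamInv s x y = ∑ k ∈ Finset.range s, ((-B.starEnd x) ^ k) y :=
    AddMonoidHom.finsetSum_apply _ _ _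
  rw [hsum]
  exact H.sum_mem fun k _ => by rw [AddMonoid.End.coe_pow]; exact hmaps.iterate k hy

section Nilpotent

variable (hs : B.leftChain s = ⊥)
include hs

lemma lamInv_add_star (x y : A) : B.lamInv s x y + B.star x (B.lamInv s x y) = y := by
  have h : (1 + B.starEnd x) * B.lamInv s x = 1 := by
    rw [← sub_neg_eq_add, lamInv, mul_neg_geom_sum, neg_pow, B.starEnd_pow_eq_zero hs, mul_zero,
      sub_zero]
  exact congrArg (· y) h

lemma lamInv_eq_of_add_star {x y v : A} (h : y + B.star x y = v) : B.lamInv s x v = y := by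
  have h' : B.lamInv s x * (1 + B.starEnd x) = 1 := by
    rw [← sub_neg_eq_add, lamInv, geom_sum_mul_neg, neg_pow, B.starEnd_pow_eq_zero hs, mul_zero,
      sub_zero]
  rw [← h]
  exact congrArg (· y) h'

lemma circ_lamInv (x y : A) : B.circ x (B.lamInv s x y) = x + y := by
  rw [B.circ_eq_add_add_star, add_assoc, B.lamInv_add_star hs]

lemma lamInv_sub_self (x y : A) : B.lamInv s x y - y = -B.star x (B.lamInv s x y) :=
  eq_neg_of_add_eq_zero_left (by rw [sub_add_eq_add_sub, B.lamInv_add_star hs, sub_self])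

lemma inv_eq_neg_lamInv (x : A) : B.inv x = -B.lamInv s x x := by
  rw [← map_neg, B.lamInv_eq_of_add_star hs (B.neg_eq_inv_add_star x).symm]

lemma inv_star (x z : A) : B.star (B.inv x) z = -B.lamInv s x (B.star x z) := by
  have h := B.circ_star x (B.inv x) z
  rw [B.circ_inv, zero_star] at h
  rw [← map_neg, B.lamInv_eq_of_add_star hs]
  exact eq_neg_of_add_eq_zero_left (by rw [h]; abel)

end Nilpotent

section Words

variable (a b c : A)

def IsWord (t : Bool) (m k : ℕ) (w : A) : Prop :=
  ∃ na nb : ℕ, BraceWord B a b c w na nb t ∧ m ≤ na + nb ∧ k ≤ na ∧ k ≤ nb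

def wordSpanC (m k : ℕ) : AddSubgroup A :=
  AddSubgroup.closure {w | B.IsWord a b c true m k w}

/-- The depth `d` is what the downward induction of `raisesDegree_of_mem` runs on. -/
def wordSpanAB (m k d : ℕ) : AddSubgroup A :=
  AddSubgroup.closure {w | B.IsWord a b c false m k w ∧ w ∈ B.leftChain d}

variable {a b c}

lemma IsWord.anti {t : Bool} {m k m' k' : ℕ} {w : A} (hw : B.IsWord a b c t m k w)
    (hm : m' ≤ m) (hk : k' ≤ k) : B.IsWord a b c t m' k' w := by
  obtain ⟨na, nb, hw, h⟩ := hw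
  exact ⟨na, nb, hw, by omega⟩

lemma IsWord.star {t : Bool} {m k m' k' : ℕ} {u w : A} (hu : B.IsWord a b c false m k u)
    (hw : B.IsWord a b c t m' k' w) : B.IsWord a b c t (m' + m) (k' + k) (B.star u w) := by
  obtain ⟨na, nb, hu, hu'⟩ := hu
  obtain ⟨na', nb', hw, hw'⟩ := hw
  exact ⟨na + na', nb + nb', .node hu hw, by omega⟩

lemma wordSpanC_anti {m k m' k' : ℕ} (hm : m' ≤ m) (hk : k' ≤ k) :
    B.wordSpanC a b c m k ≤ B.wordSpanC a b c m' k' :=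
  AddSubgroup.closure_mono fun _ hw => hw.anti B hm hk

lemma wordSpanAB_anti {m k d m' k' d' : ℕ} (hm : m' ≤ m) (hk : k' ≤ k) (hd : d' ≤ d) :
    B.wordSpanAB a b c m k d ≤ B.wordSpanAB a b c m' k' d' :=
  AddSubgroup.closure_mono fun _ hw => ⟨hw.1.anti B hm hk, B.leftChain_antitone hd hw.2⟩

lemma wordSpanAB_le_leftChain (m k d : ℕ) : B.wordSpanAB a b c m k d ≤ B.leftChain d :=
  AddSubgroup.closure_le _ |>.2 fun _ hw => hw.2

lemma mem_wordSpanC_zero : c ∈ B.wordSpanC a b c 0 0 :=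
  AddSubgroup.subset_closure ⟨0, 0, .base_c, by omega⟩

lemma star_mem_wordSpanC_of_isWord {m k m' k' : ℕ} {u z : A}
    (hu : B.IsWord a b c false m k u) (hz : z ∈ B.wordSpanC a b c m' k') :
    B.star u z ∈ B.wordSpanC a b c (m' + m) (k' + k) := by
  refine (AddSubgroup.closure_le _ |>.2 ?_ : _ ≤ (B.wordSpanC a b c _ _).comap (B.starEnd u)) hz
  exact fun w hw => AddSubgroup.subset_closure (hu.star B hw)

lemma star_mem_wordSpanAB_of_isWord {m k m' k' d : ℕ} {u z : A}
    (hu : B.IsWord a b c false m k u) (hz : z ∈ B.wordSpanAB a b c m' k' d) :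
    B.star u z ∈ B.wordSpanAB a b c (m' + m) (k' + k) (d + 1) := by
  refine (AddSubgroup.closure_le _ |>.2 ?_ : _ ≤ (B.wordSpanAB a b c _ _ _).comap (B.starEnd u)) hz
  exact fun w hw => AddSubgroup.subset_closure
    ⟨hu.star B hw.1, B.star_mem_leftChain_succ hw.2 u⟩

structure RaisesDegree (a b c : A) (m k : ℕ) (x : A) : Prop where
  star_mem_wordSpanC {m' k' : ℕ} {z : A} :
    z ∈ B.wordSpanC a b c m' k' → B.star x z ∈ B.wordSpanC a b c (m' + m) (k' + k)
  star_mem_wordSpanAB {m' k' d : ℕ} {z : A} :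
    z ∈ B.wordSpanAB a b c m' k' d → B.star x z ∈ B.wordSpanAB a b c (m' + m) (k' + k) (d + 1)

namespace RaisesDegree

variable {B} {m k : ℕ} {x y : A}

lemma zero : B.RaisesDegree a b c m k 0 :=
  ⟨fun _ => by simp [zero_mem], fun _ => by simp [zero_mem]⟩

lemma of_isWord (hx : B.IsWord a b c false m k x) : B.RaisesDegree a b c m k x :=
  ⟨B.star_mem_wordSpanC_of_isWord hx, B.star_mem_wordSpanAB_of_isWord hx⟩

lemma star_mem_wordSpanC' (hx : B.RaisesDegree a b c m k x) {m' k' : ℕ} {z : A}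
    (hz : z ∈ B.wordSpanC a b c m' k') : B.star x z ∈ B.wordSpanC a b c m' k' :=
  B.wordSpanC_anti (by omega) (by omega) (hx.star_mem_wordSpanC hz)

lemma star_mem_wordSpanAB' (hx : B.RaisesDegree a b c m k x) {m' k' d : ℕ} {z : A}
    (hz : z ∈ B.wordSpanAB a b c m' k' d) : B.star x z ∈ B.wordSpanAB a b c m' k' (d + 1) :=
  B.wordSpanAB_anti (by omega) (by omega) le_rfl (hx.star_mem_wordSpanAB hz)

lemma lamInv_mem_wordSpanAB (hx : B.RaisesDegree a b c m k x) {m' k' d : ℕ} {z : A}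
    (hz : z ∈ B.wordSpanAB a b c m' k' d) : B.lamInv s x z ∈ B.wordSpanAB a b c m' k' d :=
  B.lamInv_mem (fun _ hw => B.wordSpanAB_anti le_rfl le_rfl d.le_succ
    (hx.star_mem_wordSpanAB' hw)) hz

lemma star_mem_wordSpanC_self (hx : B.RaisesDegree a b c m k x) :
    B.star x c ∈ B.wordSpanC a b c m k := by
  simpa using hx.star_mem_wordSpanC B.mem_wordSpanC_zero

lemma circ (hx : B.RaisesDegree a b c m k x) (hy : B.RaisesDegree a b c m k y) :
    B.RaisesDegree a b c m k (B.circ x y) where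
  star_mem_wordSpanC hz := by
    rw [B.circ_star]
    exact add_mem (add_mem (hx.star_mem_wordSpanC' (hy.star_mem_wordSpanC hz))
      (hx.star_mem_wordSpanC hz)) (hy.star_mem_wordSpanC hz)
  star_mem_wordSpanAB hz := by
    rw [B.circ_star]
    refine add_mem (add_mem ?_ (hx.star_mem_wordSpanAB hz)) (hy.star_mem_wordSpanAB hz)
    exact B.wordSpanAB_anti le_rfl le_rfl (by omega)
      (hx.star_mem_wordSpanAB' (hy.star_mem_wordSpanAB hz))

lemma inv (hs : B.leftChain s = ⊥) (hx : B.RaisesDegree a b c m k x) :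
    B.RaisesDegree a b c m k (B.inv x) where
  star_mem_wordSpanC hz := by
    rw [B.inv_star hs]
    exact neg_mem (B.lamInv_mem (fun _ => hx.star_mem_wordSpanC') (hx.star_mem_wordSpanC hz))
  star_mem_wordSpanAB hz := by
    rw [B.inv_star hs]
    exact neg_mem (hx.lamInv_mem_wordSpanAB (hx.star_mem_wordSpanAB hz))

end RaisesDegree

section Nilpotent

variable (hs : B.leftChain s = ⊥)
include hs

lemma RaisesDegree.add {m k d : ℕ} {x y : A} (hx : B.RaisesDegree a b c m k x)
    (hy : y ∈ B.wordSpanAB a b c m k d)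
    (hy' : ∀ e ∈ B.wordSpanAB a b c m k (d + 1), B.RaisesDegree a b c m k (y + e)) :
    B.RaisesDegree a b c m k (x + y) := by
  rw [← B.circ_lamInv hs x y]
  refine hx.circ (add_sub_cancel y (B.lamInv s x y) ▸ hy' _ ?_)
  rw [B.lamInv_sub_self hs]
  exact neg_mem (hx.star_mem_wordSpanAB' (hx.lamInv_mem_wordSpanAB hy))

lemma raisesDegree_of_mem_of_succ {m k d : ℕ}
    (IH : ∀ y ∈ B.wordSpanAB a b c m k (d + 1), B.RaisesDegree a b c m k y) {x : A}
    (hx : x ∈ B.wordSpanAB a b c m k d) : B.RaisesDegree a b c m k x := by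
  have hsucc : B.wordSpanAB a b c m k (d + 1) ≤ B.wordSpanAB a b c m k d :=
    B.wordSpanAB_anti le_rfl le_rfl d.le_succ
  suffices ∀ e ∈ B.wordSpanAB a b c m k (d + 1), B.RaisesDegree a b c m k (x + e) by
    simpa using this 0 (zero_mem _)
  induction hx using AddSubgroup.closure_induction with
  | mem w hw =>
    exact fun e he => (RaisesDegree.of_isWord hw.1).add B hs (hsucc he)
      fun e' he' => IH _ (add_mem he he')
  | zero => simpa using IH
  | add x y _ hy ihx ihy =>
    intro e he
    have hx' : B.RaisesDegree a b c m k x := by simpa using ihx 0 (zero_mem _)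
    rw [add_assoc]
    exact hx'.add B hs (add_mem hy (hsucc he))
      fun e' he' => add_assoc y e e' ▸ ihy _ (add_mem he he')
  | neg x hx ihx =>
    intro e he
    have hx' : B.RaisesDegree a b c m k x := by simpa using ihx 0 (zero_mem _)
    have hinv : B.inv x ∈ B.wordSpanAB a b c m k d := by
      rw [B.inv_eq_neg_lamInv hs]
      exact neg_mem (hx'.lamInv_mem_wordSpanAB hx)
    have hrest : B.star x (B.inv x) + e ∈ B.wordSpanAB a b c m k (d + 1) :=
      add_mem (hx'.star_mem_wordSpanAB' hinv) he
    rw [B.neg_eq_inv_add_star, add_assoc]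
    exact (hx'.inv hs).add B hs (hsucc hrest) fun e' he' => IH _ (add_mem hrest he')

theorem raisesDegree_of_mem {m k d : ℕ} {x : A} (hx : x ∈ B.wordSpanAB a b c m k d) :
    B.RaisesDegree a b c m k x := by
  obtain ⟨n, hn⟩ : ∃ n, s ≤ d + n := ⟨s, by omega⟩
  induction n generalizing d x with
  | zero =>
    have hx0 := B.leftChain_antitone hn (B.wordSpanAB_le_leftChain m k d hx)
    rw [hs, AddSubgroup.mem_bot] at hx0
    exact hx0 ▸ .zero
  | succ n ih => exact B.raisesDegree_of_mem_of_succ hs (fun y hy => ih hy (by omega)) hx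

lemma star_add_sub_star_mem {m k : ℕ} {x e : A} (hx : x ∈ B.wordSpanAB a b c 0 0 0)
    (he : e ∈ B.wordSpanAB a b c m k 0) :
    B.star (x + e) c - B.star x c ∈ B.wordSpanC a b c m k := by
  have hx' := B.raisesDegree_of_mem hs hx
  have he' := B.raisesDegree_of_mem hs (hx'.lamInv_mem_wordSpanAB (s := s) he)
  rw [← B.circ_lamInv hs x e, B.circ_star, add_sub_right_comm, add_sub_cancel_right]
  exact add_mem (hx'.star_mem_wordSpanC' he'.star_mem_wordSpanC_self) he'.star_mem_wordSpanC_self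

lemma star_add_sub_star_sub_star_mem {m₁ k₁ m₂ k₂ : ℕ} {x y : A}
    (hx : x ∈ B.wordSpanAB a b c m₁ k₁ 0) (hy : y ∈ B.wordSpanAB a b c m₂ k₂ 0) :
    B.star (x + y) c - B.star x c - B.star y c ∈ B.wordSpanC a b c (m₂ + m₁) (k₂ + k₁) := by
  have hx' := B.raisesDegree_of_mem hs hx
  have hy' : B.lamInv s x y ∈ B.wordSpanAB a b c m₂ k₂ 0 := hx'.lamInv_mem_wordSpanAB hy
  have hdiff : B.lamInv s x y - y ∈ B.wordSpanAB a b c (m₂ + m₁) (k₂ + k₁) 0 := by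
    rw [B.lamInv_sub_self hs]
    exact neg_mem (B.wordSpanAB_anti le_rfl le_rfl (Nat.zero_le 1) (hx'.star_mem_wordSpanAB hy'))
  have hshift := B.star_add_sub_star_mem hs
    (B.wordSpanAB_anti (Nat.zero_le _) (Nat.zero_le _) le_rfl hy) hdiff
  rw [add_sub_cancel] at hshift
  rw [← B.circ_lamInv hs x y, B.circ_star]
  have hsplit : B.star x (B.star (B.lamInv s x y) c) + B.star x c + B.star (B.lamInv s x y) c
      - B.star x c - B.star y c = B.star x (B.star (B.lamInv s x y) c)
      + (B.star (B.lamInv s x y) c - B.star y c) := by abel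
  rw [hsplit]
  exact add_mem (hx'.star_mem_wordSpanC (B.raisesDegree_of_mem hs hy').star_mem_wordSpanC_self)
    hshift

end Nilpotent

end Words

end LeftBrace

theorem statement1 {A : Type*} [AddCommGroup A] (B : LeftBrace A) (s : ℕ)
    (hs : B.leftChain s = ⊥) (a b c : A) :
    B.star a (B.star b c) - B.star (B.star a b) c
      - B.star b (B.star a c) + B.star (B.star b a) c
    ∈ AddSubgroup.closure
        {w : A | ∃ na nb : ℕ, BraceWord B a b c w na nb true ∧
          3 ≤ na + nb ∧ 1 ≤ na ∧ 1 ≤ nb} := by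
  have hσ : a + b ∈ B.wordSpanAB a b c 1 0 0 :=
    add_mem (AddSubgroup.subset_closure ⟨⟨_, _, .base_a, by omega⟩, AddSubgroup.mem_top _⟩)
      (AddSubgroup.subset_closure ⟨⟨_, _, .base_b, by omega⟩, AddSubgroup.mem_top _⟩)
  have hab : B.star a b ∈ B.wordSpanAB a b c 2 1 0 := AddSubgroup.subset_closure
    ⟨⟨_, _, .node .base_a .base_b, by omega⟩, AddSubgroup.mem_top _⟩
  have hba : B.star b a ∈ B.wordSpanAB a b c 2 1 0 := AddSubgroup.subset_closure
    ⟨⟨_, _, .node .base_b .base_a, by omega⟩, AddSubgroup.mem_top _⟩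
  have hcirc_ab := B.circ_star a b c
  have hcirc_ba := B.circ_star b a c
  rw [B.circ_eq_add_add_star] at hcirc_ab hcirc_ba
  rw [add_comm b a] at hcirc_ba
  have hexpand : B.star a (B.star b c) - B.star (B.star a b) c
      - B.star b (B.star a c) + B.star (B.star b a) c
      = (B.star (a + b + B.star a b) c - B.star (a + b) c - B.star (B.star a b) c)
      - (B.star (a + b + B.star b a) c - B.star (a + b) c - B.star (B.star b a) c) := by
    rw [hcirc_ab, hcirc_ba]; abel
  have hmem := sub_mem (B.star_add_sub_star_sub_star_mem hs hσ hab)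
    (B.star_add_sub_star_sub_star_mem hs hσ hba)
  rw [hexpand]
  exact hmem
end

section
/- Let (A, +, ·) be a nilpotent pre-Lie algebra over the field ℚ, let Ω: A → A be the inverse of the map W, define a∘b = a + e^{L_{Ω(a)}}(b) and a*b = a∘b − a − b. Then for all a, b ∈ A and every ℚ-linear functional φ: A → ℚ, the real sequence n ↦ φ( 2^n · ( ((1/2^n)·a) * b ) ) converges to φ(a·b) as n → ∞. -/
open Filter Topology

/-- A pre-Lie algebra over a field `F`: an `F`-vector space with a bilinear
product satisfying `(x·y)·z − x·(y·z) = (y·x)·z − y·(x·z)`. -/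
structure PreLieAlg (F : Type*) (A : Type*) [Field F] [AddCommGroup A] [Module F A] where
  mul : A → A → A
  mul_add : ∀ a b c : A, mul a (b + c) = mul a b + mul a c
  add_mul : ∀ a b c : A, mul (a + b) c = mul a c + mul b c
  smul_mul : ∀ (e : F) (a b : A), mul (e • a) b = e • mul a b
  mul_smul : ∀ (e : F) (a b : A), mul a (e • b) = e • mul a b
  pre_lie : ∀ a b c : A,
    mul (mul a b) c - mul a (mul b c) = mul (mul b a) c - mul b (mul a c)

/-- `P.IsProd x n` : `x` is a product of `n` elements of `A`, with any
distribution of brackets. -/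
inductive PreLieAlg.IsProd {F A : Type*} [Field F] [AddCommGroup A] [Module F A]
    (P : PreLieAlg F A) : A → ℕ → Prop
  | single (a : A) : PreLieAlg.IsProd P a 1
  | node {u v : A} {n m : ℕ} : PreLieAlg.IsProd P u n → PreLieAlg.IsProd P v m →
      PreLieAlg.IsProd P (P.mul u v) (n + m)

/-- `A` is nilpotent of index `n` (`0 < n`): every product of `n` elements
(with any distribution of brackets) is zero. -/
def PreLieAlg.IsNilpotentOf {F A : Type*} [Field F] [AddCommGroup A] [Module F A]
    (P : PreLieAlg F A) (n : ℕ) : Prop :=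
  0 < n ∧ ∀ x : A, P.IsProd x n → x = 0

/-- `e^{L_x}(b) = Σ_{k ≥ 0} (1/k!) • L_x^k(b)`; under nilpotency of index `n`
all terms with `k ≥ n - 1` vanish, so the series equals this truncated sum. -/
def PreLieAlg.expL {F A : Type*} [Field F] [AddCommGroup A] [Module F A]
    (P : PreLieAlg F A) (n : ℕ) (x b : A) : A :=
  ∑ k ∈ Finset.range n, ((Nat.factorial k : F))⁻¹ • (P.mul x)^[k] b

/-- `W(a) = Σ_{k ≥ 1} (1/k!) • L_a^{k-1}(a)`; under nilpotency of index `n`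
all terms with `k ≥ n` vanish, so the series equals this truncated sum. -/
def PreLieAlg.W {F A : Type*} [Field F] [AddCommGroup A] [Module F A]
    (P : PreLieAlg F A) (n : ℕ) (a : A) : A :=
  ∑ k ∈ Finset.range n, ((Nat.factorial (k + 1) : F))⁻¹ • (P.mul a)^[k] a

/-- The group-of-flows multiplication `a ∘ b = a + e^{L_{Ω(a)}}(b)`. -/
def PreLieAlg.flow {F A : Type*} [Field F] [AddCommGroup A] [Module F A]
    (P : PreLieAlg F A) (n : ℕ) (Ω : A → A) (a b : A) : A :=
  a + P.expL n (Ω a) b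

/-- `a * b = a ∘ b - a - b` for the group-of-flows multiplication. -/
def PreLieAlg.flowStar {F A : Type*} [Field F] [AddCommGroup A] [Module F A]
    (P : PreLieAlg F A) (n : ℕ) (Ω : A → A) (a b : A) : A :=
  P.flow n Ω a b - a - b

/-!
Products of `k` elements span a decreasing filtration of `A` that vanishes at the nilpotency
index. Writing `W z = z + R z` with `R z` made of products of at least two factors, the
fixed-point iteration `z ↦ x - R z` gains one filtration degree per step, so it reaches `Ω x`
after finitely many steps. For `x = t • a` every iterate is polynomial in `t`, hence
`Ω (t • a) = t • a + O(t²)` as polynomial curves, and then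
`(t • a) * b = e^{L_{Ω (t • a)}} b - b = t • (a · b) + O(t²)`.
Dividing by `t = 2⁻ᵐ` and applying `φ` gives the limit.
-/

theorem Submodule.apply_mem_of_mem_span_span {R M N Q : Type*} [CommSemiring R]
    [AddCommMonoid M] [AddCommMonoid N] [AddCommMonoid Q] [Module R M] [Module R N] [Module R Q]
    (f : M →ₗ[R] N →ₗ[R] Q) {s : Set M} {t : Set N} {p : Submodule R Q}
    (h : ∀ x ∈ s, ∀ y ∈ t, f x y ∈ p) {x : M} {y : N}
    (hx : x ∈ Submodule.span R s) (hy : y ∈ Submodule.span R t) : f x y ∈ p := by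
  have hxy := Submodule.apply_mem_map₂ f hx hy
  rw [Submodule.map₂_span_span] at hxy
  refine Submodule.span_le.2 ?_ hxy
  rintro _ ⟨x, hx, y, hy, rfl⟩
  exact h x hx y hy

def polyCurve (K A : Type*) [Field K] [AddCommGroup A] [Module K A] (d : ℕ) :
    Submodule K (K → A) :=
  Submodule.span K {F | ∃ k, d ≤ k ∧ ∃ x : A, F = fun t => t ^ k • x}

section polyCurve

variable {K A : Type*} [Field K] [AddCommGroup A] [Module K A]

theorem monomial_mem_polyCurve {d k : ℕ} (h : d ≤ k) (x : A) :
    (fun t : K => t ^ k • x) ∈ polyCurve K A d :=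
  Submodule.subset_span ⟨k, h, x, rfl⟩

theorem polyCurve_anti {d e : ℕ} (h : d ≤ e) : polyCurve K A e ≤ polyCurve K A d :=
  Submodule.span_mono fun _ ⟨k, hk, x, hF⟩ => ⟨k, h.trans hk, x, hF⟩

theorem const_mem_polyCurve (x : A) : (fun _ : K => x) ∈ polyCurve K A 0 := by
  simpa using monomial_mem_polyCurve (K := K) (le_refl 0) x

theorem smul_mem_polyCurve_one (x : A) : (fun t : K => t • x) ∈ polyCurve K A 1 := by
  simpa using monomial_mem_polyCurve (K := K) (le_refl 1) x

end polyCurve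

theorem tendsto_inv_smul_of_mem_polyCurve {K A ι : Type*} [NormedField K] [AddCommGroup A]
    [Module K A] {F : K → A} (hF : F ∈ polyCurve K A 2) (φ : A →ₗ[K] K) {l : Filter ι}
    {u : ι → K} (hu : Tendsto u l (𝓝 0)) :
    Tendsto (fun i => φ ((u i)⁻¹ • F (u i))) l (𝓝 0) := by
  induction hF using Submodule.span_induction with
  | mem F hF =>
    obtain ⟨k, hk, x, rfl⟩ := hF
    obtain ⟨j, rfl⟩ := Nat.exists_eq_add_of_le' hk
    -- also true at `s = 0`, as `j + 1 ≠ 0`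
    have hpow : ∀ s : K, s⁻¹ * s ^ (j + 2) = s ^ (j + 1) := fun s => by
      rcases eq_or_ne s 0 with rfl | hs
      · simp
      · rw [pow_succ _ (j + 1), mul_comm, mul_assoc, mul_inv_cancel₀ hs, mul_one]
    simp only [smul_smul, hpow, map_smul, smul_eq_mul]
    simpa using (hu.pow (j + 1)).mul_const (φ x)
  | zero => simpa using tendsto_const_nhds
  | add F G _ _ hF hG => simpa using hF.add hG
  | smul c F _ hF => simpa [smul_comm _ c] using hF.const_mul c

namespace PreLieAlg

variable {K A : Type*} [Field K] [AddCommGroup A] [Module K A] (P : PreLieAlg K A)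

def mulₗ : A →ₗ[K] A →ₗ[K] A :=
  LinearMap.mk₂ K P.mul P.add_mul P.smul_mul P.mul_add P.mul_smul

theorem mul_sub (x y z : A) : P.mul x (y - z) = P.mul x y - P.mul x z :=
  (P.mulₗ x).map_sub y z

theorem sub_mul (x y z : A) : P.mul (x - y) z = P.mul x z - P.mul y z :=
  P.mulₗ.map_sub₂ x y z

theorem subsingleton_of_isNilpotentOf_one (hn : P.IsNilpotentOf 1) : Subsingleton A :=
  ⟨fun x y => (hn.2 x (.single x)).trans (hn.2 y (.single y)).symm⟩

namespace IsProd

variable {P}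

theorem one_le {x : A} {m : ℕ} (h : P.IsProd x m) : 1 ≤ m := by
  induction h with
  | single => rfl
  | node _ _ _ _ => omega

/-- Bracketing adjacent factors together turns a product of `m` factors into one of `k`. -/
theorem of_le {x : A} {m : ℕ} (h : P.IsProd x m) {k : ℕ} (hk : 1 ≤ k) (hkm : k ≤ m) :
    P.IsProd x k := by
  induction h generalizing k with
  | single a =>
    obtain rfl : k = 1 := by omega
    exact .single a
  | @node u v p q hu hv ihu ihv =>
    by_cases hk1 : k = 1
    · subst hk1; exact .single _
    · have := hu.one_le
      have := hv.one_le
      have hsplit : k = min p (k - 1) + (k - min p (k - 1)) := by omega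
      rw [hsplit]
      exact .node (ihu (by omega) (by omega)) (ihv (by omega) (by omega))

end IsProd

def prodSpan (k : ℕ) : Submodule K A := Submodule.span K {x | P.IsProd x k}

theorem mem_prodSpan_one (x : A) : x ∈ P.prodSpan 1 :=
  Submodule.subset_span (IsProd.single x)

theorem mul_mem_prodSpan {p q : ℕ} {x y : A} (hx : x ∈ P.prodSpan p) (hy : y ∈ P.prodSpan q) :
    P.mul x y ∈ P.prodSpan (p + q) :=
  Submodule.apply_mem_of_mem_span_span P.mulₗ
    (fun _ hu _ hv => Submodule.subset_span (IsProd.node hu hv)) hx hy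

theorem prodSpan_anti {k l : ℕ} (hk : 1 ≤ k) (hkl : k ≤ l) : P.prodSpan l ≤ P.prodSpan k :=
  Submodule.span_mono fun _ hx => IsProd.of_le hx hk hkl

theorem prodSpan_eq_bot {n : ℕ} (hn : P.IsNilpotentOf n) : P.prodSpan n = ⊥ :=
  (Submodule.eq_bot_iff _).2 fun x hx => by
    induction hx using Submodule.span_induction with
    | mem x hx => exact hn.2 x hx
    | zero => rfl
    | add x y _ _ hx hy => rw [hx, hy, add_zero]
    | smul c x _ hx => rw [hx, smul_zero]

theorem mul_sub_mul_mem_prodSpan {j : ℕ} {z z' w w' : A} (hz : z - z' ∈ P.prodSpan j)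
    (hw : w - w' ∈ P.prodSpan j) : P.mul z w - P.mul z' w' ∈ P.prodSpan (j + 1) := by
  have e : P.mul z w - P.mul z' w' = P.mul (z - z') w + P.mul z' (w - w') := by
    rw [P.sub_mul, P.mul_sub]; abel
  rw [e]
  exact add_mem (P.mul_mem_prodSpan hz (P.mem_prodSpan_one w))
    (add_comm 1 j ▸ P.mul_mem_prodSpan (P.mem_prodSpan_one z') hw)

theorem iterate_mul_self_sub_mem_prodSpan {j : ℕ} (hj : 1 ≤ j) {z z' : A}
    (hz : z - z' ∈ P.prodSpan j) (k : ℕ) :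
    (P.mul z)^[k] z - (P.mul z')^[k] z' ∈ P.prodSpan j := by
  induction k with
  | zero => exact hz
  | succ k ih =>
    rw [Function.iterate_succ_apply', Function.iterate_succ_apply']
    exact P.prodSpan_anti hj (Nat.le_succ j) (P.mul_sub_mul_mem_prodSpan hz ih)

def Wtail (m : ℕ) (z : A) : A :=
  ∑ k ∈ Finset.range m, ((Nat.factorial (k + 2) : K))⁻¹ • (P.mul z)^[k + 1] z

theorem W_succ_eq (m : ℕ) (z : A) : P.W (m + 1) z = z + P.Wtail m z := by
  rw [W, Finset.sum_range_succ', add_comm, Wtail]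
  simp

theorem Wtail_sub_mem_prodSpan {j : ℕ} (hj : 1 ≤ j) (m : ℕ) {z z' : A}
    (hz : z - z' ∈ P.prodSpan j) : P.Wtail m z - P.Wtail m z' ∈ P.prodSpan (j + 1) := by
  rw [Wtail, Wtail, ← Finset.sum_sub_distrib]
  refine Submodule.sum_mem _ fun k _ => ?_
  rw [← smul_sub, Function.iterate_succ_apply', Function.iterate_succ_apply']
  exact Submodule.smul_mem _ _
    (P.mul_sub_mul_mem_prodSpan hz (P.iterate_mul_self_sub_mem_prodSpan hj hz k))

/-- Fixed-point iteration for `W z = x`, rewritten as `z = x - Wtail m z`. -/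
def picard (m : ℕ) (x : A) : ℕ → A
  | 0 => 0
  | i + 1 => x - P.Wtail m (picard m x i)

/-- The `i`-th iterate agrees with any solution modulo products of `i + 1` elements, so the
iteration becomes exact once these vanish. -/
theorem eq_picard_of_W_eq {m : ℕ} (hn : P.IsNilpotentOf (m + 1)) {x y : A}
    (hy : P.W (m + 1) y = x) : y = P.picard m x m := by
  have hfix : y = x - P.Wtail m y := by rw [← hy, W_succ_eq]; abel
  have hclose : ∀ i, y - P.picard m x i ∈ P.prodSpan (i + 1) := by
    intro i
    induction i with
    | zero => exact P.mem_prodSpan_one _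
    | succ i ih =>
      have e : y - P.picard m x (i + 1) = P.Wtail m (P.picard m x i) - P.Wtail m y := by
        rw [picard]; nth_rw 1 [hfix]; abel
      rw [e, ← neg_sub]
      exact neg_mem (P.Wtail_sub_mem_prodSpan (Nat.le_add_left 1 i) m ih)
  have h := hclose m
  rw [P.prodSpan_eq_bot hn, Submodule.mem_bot, sub_eq_zero] at h
  exact h

def curveMulₗ : (K → A) →ₗ[K] (K → A) →ₗ[K] (K → A) :=
  LinearMap.mk₂ K (fun F G t => P.mul (F t) (G t))
    (fun _ _ _ => funext fun _ => P.add_mul _ _ _) (fun _ _ _ => funext fun _ => P.smul_mul _ _ _)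
    (fun _ _ _ => funext fun _ => P.mul_add _ _ _) (fun _ _ _ => funext fun _ => P.mul_smul _ _ _)

theorem mul_mem_polyCurve {d e : ℕ} {F G : K → A} (hF : F ∈ polyCurve K A d)
    (hG : G ∈ polyCurve K A e) : (fun t => P.mul (F t) (G t)) ∈ polyCurve K A (d + e) := by
  refine Submodule.apply_mem_of_mem_span_span P.curveMulₗ ?_ hF hG
  rintro _ ⟨k, hk, x, rfl⟩ _ ⟨l, hl, y, rfl⟩
  have h : P.curveMulₗ (fun t => t ^ k • x) (fun t => t ^ l • y)
      = fun t : K => t ^ (k + l) • P.mul x y := by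
    ext t
    simp only [curveMulₗ, LinearMap.mk₂_apply, P.smul_mul, P.mul_smul, smul_smul, pow_add]
  rw [h]
  exact monomial_mem_polyCurve (by omega) _

theorem iterate_mul_mem_polyCurve {e : ℕ} {F G : K → A} (hF : F ∈ polyCurve K A 1)
    (hG : G ∈ polyCurve K A e) (k : ℕ) :
    (fun t => (P.mul (F t))^[k] (G t)) ∈ polyCurve K A (k + e) := by
  induction k with
  | zero => simpa using hG
  | succ k ih =>
    simp only [Function.iterate_succ_apply']
    simpa [add_right_comm, add_comm 1] using P.mul_mem_polyCurve hF ih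

theorem Wtail_mem_polyCurve (m : ℕ) {F : K → A} (hF : F ∈ polyCurve K A 1) :
    (fun t => P.Wtail m (F t)) ∈ polyCurve K A 2 := by
  have h : (fun t => P.Wtail m (F t)) = ∑ k ∈ Finset.range m,
      ((Nat.factorial (k + 2) : K))⁻¹ • fun t => (P.mul (F t))^[k + 1] (F t) := by
    ext t
    simp [Wtail, Finset.sum_apply]
  rw [h]
  refine Submodule.sum_mem _ fun k _ => Submodule.smul_mem _ _ ?_
  exact polyCurve_anti (by omega) (P.iterate_mul_mem_polyCurve hF hF (k + 1))

theorem picard_mem_polyCurve (m : ℕ) (a : A) (i : ℕ) :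
    (fun t : K => P.picard m (t • a) i) ∈ polyCurve K A 1 := by
  induction i with
  | zero => exact zero_mem _
  | succ i ih =>
    exact sub_mem (smul_mem_polyCurve_one a)
      (polyCurve_anti (by omega) (P.Wtail_mem_polyCurve m ih))

theorem inv_W_smul_mem_polyCurve {m : ℕ} (hn : P.IsNilpotentOf (m + 1)) {Ω : A → A}
    (hΩ : ∀ x, P.W (m + 1) (Ω x) = x) (a : A) :
    (fun t : K => Ω (t • a)) ∈ polyCurve K A 1 ∧
      (fun t : K => Ω (t • a) - t • a) ∈ polyCurve K A 2 := by
  have hpicard : (fun t : K => Ω (t • a)) = fun t => P.picard m (t • a) m :=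
    funext fun t => P.eq_picard_of_W_eq hn (hΩ (t • a))
  have hcurve : (fun t : K => Ω (t • a)) ∈ polyCurve K A 1 :=
    hpicard ▸ P.picard_mem_polyCurve m a m
  refine ⟨hcurve, ?_⟩
  have htail : (fun t : K => Ω (t • a) - t • a) = -fun t => P.Wtail m (Ω (t • a)) := by
    ext t
    have h := hΩ (t • a)
    rw [W_succ_eq] at h
    rw [Pi.neg_apply, eq_neg_iff_add_eq_zero, sub_add_eq_add_sub, h, sub_self]
  rw [htail]
  exact neg_mem (P.Wtail_mem_polyCurve m hcurve)

theorem flowStar_smul_sub_mem_polyCurve {n : ℕ} (hn : P.IsNilpotentOf n) {Ω : A → A}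
    (hΩ : ∀ x, P.W n (Ω x) = x) (a b : A) :
    (fun t : K => P.flowStar n Ω (t • a) b - t • P.mul a b) ∈ polyCurve K A 2 := by
  rcases n with _ | _ | m
  · exact absurd hn.1 (lt_irrefl 0)
  · have := P.subsingleton_of_isNilpotentOf_one hn
    convert zero_mem (polyCurve K A 2)
  · obtain ⟨hcurve, hlinear⟩ := P.inv_W_smul_mem_polyCurve (K := K) hn hΩ a
    -- the terms `k = 0, 1` of `e^{L_{Ω(t•a)}} b` are `b + Ω(t•a)·b`
    have h : (fun t : K => P.flowStar (m + 2) Ω (t • a) b - t • P.mul a b)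
        = (fun t => P.mul (Ω (t • a) - t • a) b) + ∑ k ∈ Finset.range m,
          ((Nat.factorial (k + 2) : K))⁻¹ • fun t => (P.mul (Ω (t • a)))^[k + 2] b := by
      ext t
      simp [flowStar, flow, expL, Finset.sum_range_succ', P.sub_mul, P.smul_mul, Finset.sum_apply]
      abel
    rw [h]
    have hfirst := P.mul_mem_polyCurve hlinear (const_mem_polyCurve (K := K) b)
    refine add_mem hfirst (Submodule.sum_mem _ fun k _ => Submodule.smul_mem _ _ ?_)
    exact polyCurve_anti (by omega)
      (P.iterate_mul_mem_polyCurve hcurve (const_mem_polyCurve b) (k + 2))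

end PreLieAlg

theorem statement13_general {A : Type*} [AddCommGroup A] [Module ℚ A]
    (P : PreLieAlg ℚ A) (n : ℕ) (hn : P.IsNilpotentOf n)
    (Ω : A → A) (hΩ₁ : ∀ a, P.W n (Ω a) = a)
    (a b : A) (φ : A →ₗ[ℚ] ℚ) :
    Tendsto (fun m : ℕ =>
        ((φ ((2 ^ m : ℚ) • P.flowStar n Ω (((1 : ℚ) / 2 ^ m) • a) b) : ℚ) : ℝ))
      atTop (𝓝 ((φ (P.mul a b) : ℚ) : ℝ)) := by
  have hu : Tendsto (fun m : ℕ => (1 : ℚ) / 2 ^ m) atTop (𝓝 0) := by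
    simpa only [one_div_pow] using tendsto_pow_atTop_nhds_zero_of_lt_one
      (by norm_num : (0 : ℚ) ≤ 1 / 2) (by norm_num)
  have hsmall := tendsto_inv_smul_of_mem_polyCurve
    (P.flowStar_smul_sub_mem_polyCurve hn hΩ₁ a b) φ hu
  have hsplit : ∀ m : ℕ, φ ((2 ^ m : ℚ) • P.flowStar n Ω (((1 : ℚ) / 2 ^ m) • a) b)
      = φ (P.mul a b) + φ (((1 : ℚ) / 2 ^ m)⁻¹ •
          (P.flowStar n Ω (((1 : ℚ) / 2 ^ m) • a) b - ((1 : ℚ) / 2 ^ m) • P.mul a b)) := by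
    intro m
    rw [smul_sub, smul_smul, inv_mul_cancel₀ (by positivity), one_smul, one_div, inv_inv,
      map_sub]
    ring
  have hlim := (tendsto_const_nhds (x := φ (P.mul a b))).add hsmall
  rw [add_zero] at hlim
  simp only [← hsplit] at hlim
  exact (Rat.continuous_coe_real.tendsto _).comp hlim

theorem statement13 {A : Type*} [AddCommGroup A] [Module ℚ A]
    (P : PreLieAlg ℚ A) (n : ℕ) (hn : P.IsNilpotentOf n)
    (Ω : A → A) (hΩ₁ : ∀ a, P.W n (Ω a) = a) (hΩ₂ : ∀ a, Ω (P.W n a) = a)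
    (a b : A) (φ : A →ₗ[ℚ] ℚ) :
    Tendsto (fun m : ℕ =>
        ((φ ((2 ^ m : ℚ) • P.flowStar n Ω (((1 : ℚ) / 2 ^ m) • a) b) : ℚ) : ℝ))
      atTop (𝓝 ((φ (P.mul a b) : ℚ) : ℝ)) :=
  statement13_general P n hn Ω hΩ₁ a b φ
end
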